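/- Let V be a nonempty finite type, T ≥ 1, μ_T a PMF on V, and for each t = 1,…,T let K_t : V → V → ℝ be a Markov transition kernel on V. Fix β > 0, r : V → ℝ, and define partial rewards r_0 := r and r_t(x) := β·log( Σ_{x_0,…,x_{t-1}} (∏_{u=1}^{t} K_u(x_u,x_{u-1}))·exp(r(x_0)/β) ) at x_t = x. Let μ_t denote the time-t marginal of the chain (μ_{t-1}(y) = Σ_x μ_t(x)·K_t(x,y)), and define Z_t := Σ_{x∈V} μ_t(x)·exp(r_t(x)/β). Then Z_t is independent of t: for all 0 ≤ s, t ≤ T, Z_s = Z_t, and each equals the expectation of exp(r(x_0)/β) under the full chain law. -/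
import Mathlib


noncomputable section

/-- Extend a path `x_0,…,x_{t-1}` (given by `path : Fin t → V`) to all of `ℕ`
by setting `x_i = x` for every `i ≥ t`; in particular the endpoint is `x_t = x`. -/
def seqExt {V : Type*} {t : ℕ} (path : Fin t → V) (x : V) (i : ℕ) : V :=
  if h : i < t then path ⟨i, h⟩ else x

/-- `pathSum K r β t x = Σ_{x_0,…,x_{t-1} ∈ V} (∏_{u=1}^{t} K_u(x_u, x_{u-1})) · exp(r(x_0)/β)`,
evaluated at `x_t = x`. -/
def pathSum {V : Type*} [Fintype V] (K : ℕ → V → V → ℝ) (r : V → ℝ) (β : ℝ)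
    (t : ℕ) (x : V) : ℝ :=
  ∑ path : Fin t → V,
    (∏ u ∈ Finset.range t, K (u + 1) (seqExt path x (u + 1)) (seqExt path x u)) *
      Real.exp (r (seqExt path x 0) / β)

/-- The partial rewards: `r_0 := r` and `r_t(x) := β · log(pathSum K r β t x)` for `t ≥ 1`. -/
def partialReward {V : Type*} [Fintype V] (K : ℕ → V → V → ℝ) (r : V → ℝ) (β : ℝ) :
    ℕ → V → ℝ
  | 0 => r
  | t + 1 => fun x => β * Real.log (pathSum K r β (t + 1) x)

end

/- The normalizing constants `Z_t = Σ_x μ_t(x)·exp(r_t(x)/β)` of the reward-tilted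
marginals are independent of `t`, and each equals the expectation of `exp(r(x_0)/β)`
under the full chain law
`P(x_0,…,x_T) = μ_T(x_T)·∏_{t=1}^{T} K_t(x_t, x_{t-1})`, which is
`Σ_{x_T} μ_T(x_T) · pathSum K r β T x_T`. -/
section aux
set_option linter.unusedSectionVars false
variable {V : Type*} [Fintype V]

lemma seqExt_snoc {t : ℕ} (p : Fin t → V) (y x : V) {i : ℕ} (h : i ≤ t) :
    seqExt (Fin.snoc p y) x i = seqExt p y i := by
  unfold seqExt
  rcases lt_or_ge i t with h' | h'
  · rw [dif_pos (by omega : i < t + 1), dif_pos h']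
    have : (⟨i, by omega⟩ : Fin (t+1)) = Fin.castSucc ⟨i, h'⟩ := rfl
    rw [this, Fin.snoc_castSucc]
  · have hit : i = t := le_antisymm h h'
    subst hit
    rw [dif_pos (by omega : i < i + 1), dif_neg (lt_irrefl i)]
    have : (⟨i, by omega⟩ : Fin (i+1)) = Fin.last i := rfl
    rw [this, Fin.snoc_last]

lemma pathSum_zero (K : ℕ → V → V → ℝ) (r : V → ℝ) (β : ℝ) (x : V) :
    pathSum K r β 0 x = Real.exp (r x / β) := by
  simp [pathSum, seqExt]

lemma prodTerm_snoc (K : ℕ → V → V → ℝ) (r : V → ℝ) (β : ℝ) (t : ℕ) (x y : V) (p : Fin t → V) :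
    (∏ u ∈ Finset.range (t + 1),
        K (u + 1) (seqExt (Fin.snoc p y) x (u + 1)) (seqExt (Fin.snoc p y) x u)) *
      Real.exp (r (seqExt (Fin.snoc p y) x 0) / β)
    = K (t + 1) x y *
      ((∏ u ∈ Finset.range t, K (u + 1) (seqExt p y (u + 1)) (seqExt p y u)) *
        Real.exp (r (seqExt p y 0) / β)) := by
  rw [Finset.prod_range_succ]
  have h2 : seqExt (Fin.snoc p y) x (t + 1) = x := dif_neg (by omega)
  have h3 : seqExt p y t = y := dif_neg (by omega)
  have hcongr : ∀ u ∈ Finset.range t,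
      K (u + 1) (seqExt (Fin.snoc p y) x (u + 1)) (seqExt (Fin.snoc p y) x u)
        = K (u + 1) (seqExt p y (u + 1)) (seqExt p y u) := fun u hu => by
    have := Finset.mem_range.mp hu
    rw [seqExt_snoc p y x (by omega), seqExt_snoc p y x (by omega)]
  rw [h2, seqExt_snoc p y x le_rfl, seqExt_snoc p y x (Nat.zero_le t), h3,
    Finset.prod_congr rfl hcongr]
  ring

lemma pathSum_succ (K : ℕ → V → V → ℝ) (r : V → ℝ) (β : ℝ) (t : ℕ) (x : V) :
    pathSum K r β (t + 1) x = ∑ y, K (t + 1) x y * pathSum K r β t y := by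
  unfold pathSum
  rw [← Equiv.sum_comp (Fin.snocEquiv (fun _ : Fin (t + 1) => V)), Fintype.sum_prod_type]
  refine Finset.sum_congr rfl fun y _ => ?_
  rw [Finset.mul_sum]
  refine Finset.sum_congr rfl fun p _ => ?_
  exact prodTerm_snoc K r β t x y p
end aux
set_option linter.unusedSectionVars false
section main
variable {V : Type*} [Fintype V] [Nonempty V]

lemma pathSum_pos (T : ℕ) (K : ℕ → V → V → ℝ)
    (hK : ∀ t, 1 ≤ t → t ≤ T → (∀ x y, 0 ≤ K t x y) ∧ (∀ x, ∑ y, K t x y = 1))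
    (β : ℝ) (r : V → ℝ) :
    ∀ t, t ≤ T → ∀ x, 0 < pathSum K r β t x := by
  intro t
  induction t with
  | zero => intro _ x; rw [pathSum_zero]; exact Real.exp_pos _
  | succ t ih =>
    intro ht x
    obtain ⟨hKnn, hKsum⟩ := hK (t + 1) (by omega) ht
    rw [pathSum_succ]
    have hnn : ∀ y ∈ Finset.univ, 0 ≤ K (t + 1) x y * pathSum K r β t y := fun y _ =>
      mul_nonneg (hKnn x y) (le_of_lt (ih (by omega) y))
    have : ∃ y, 0 < K (t + 1) x y := by
      by_contra hc
      push_neg at hc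
      have : (∑ y, K (t + 1) x y) ≤ 0 := Finset.sum_nonpos (fun y _ => hc y)
      rw [hKsum x] at this; linarith
    obtain ⟨y, hy⟩ := this
    exact Finset.sum_pos' hnn ⟨y, Finset.mem_univ y,
      mul_pos hy (ih (by omega) y)⟩

lemma exp_partialReward (T : ℕ) (K : ℕ → V → V → ℝ)
    (hK : ∀ t, 1 ≤ t → t ≤ T → (∀ x y, 0 ≤ K t x y) ∧ (∀ x, ∑ y, K t x y = 1))
    (β : ℝ) (hβ : 0 < β) (r : V → ℝ) :
    ∀ t, t ≤ T → ∀ x, Real.exp (partialReward K r β t x / β) = pathSum K r β t x := by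
  intro t ht x
  cases t with
  | zero => rw [pathSum_zero]; rfl
  | succ t =>
    show Real.exp (β * Real.log (pathSum K r β (t + 1) x) / β) = _
    rw [mul_div_cancel_left₀ _ (ne_of_gt hβ),
      Real.exp_log (pathSum_pos T K hK β r (t + 1) ht x)]

lemma sum_step (T : ℕ) (K : ℕ → V → V → ℝ) (β : ℝ) (r : V → ℝ)
    (μ : ℕ → V → ℝ)
    (hμ_rec : ∀ t, 1 ≤ t → t ≤ T → ∀ y, μ (t - 1) y = ∑ x, μ t x * K t x y)
    (t : ℕ) (ht : t + 1 ≤ T) :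
    (∑ x, μ t x * pathSum K r β t x) = ∑ x, μ (t + 1) x * pathSum K r β (t + 1) x := by
  have hrec : ∀ y, μ t y = ∑ x, μ (t + 1) x * K (t + 1) x y := by
    intro y
    have := hμ_rec (t + 1) (by omega) ht y
    simpa using this
  calc (∑ y, μ t y * pathSum K r β t y)
      = ∑ y, (∑ x, μ (t + 1) x * K (t + 1) x y) * pathSum K r β t y := by
        refine Finset.sum_congr rfl fun y _ => ?_; rw [hrec y]
    _ = ∑ y, ∑ x, μ (t + 1) x * (K (t + 1) x y * pathSum K r β t y) := by
        refine Finset.sum_congr rfl fun y _ => ?_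
        rw [Finset.sum_mul]
        exact Finset.sum_congr rfl fun x _ => by ring
    _ = ∑ x, ∑ y, μ (t + 1) x * (K (t + 1) x y * pathSum K r β t y) := Finset.sum_comm
    _ = ∑ x, μ (t + 1) x * pathSum K r β (t + 1) x := by
        refine Finset.sum_congr rfl fun x _ => ?_
        rw [pathSum_succ, Finset.mul_sum]

lemma sum_invariant (T : ℕ) (K : ℕ → V → V → ℝ) (β : ℝ) (r : V → ℝ)
    (μ : ℕ → V → ℝ)
    (hμ_rec : ∀ t, 1 ≤ t → t ≤ T → ∀ y, μ (t - 1) y = ∑ x, μ t x * K t x y)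
    (t : ℕ) (ht : t ≤ T) :
    (∑ x, μ t x * pathSum K r β t x) = ∑ x, μ T x * pathSum K r β T x := by
  have main : ∀ d t, t + d = T →
      (∑ x, μ t x * pathSum K r β t x) = ∑ x, μ T x * pathSum K r β T x := by
    intro d
    induction d with
    | zero => intro t h; rw [show t = T by omega]
    | succ d ih =>
      intro t h
      rw [sum_step T K β r μ hμ_rec t (by omega)]
      exact ih (t + 1) (by omega)
  exact main (T - t) t (by omega)

end main

/-- main -/
theorem tilted_normalizers_constant
    {V : Type*} [Fintype V] [Nonempty V]
    (T : ℕ) (hT : 1 ≤ T)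
    (K : ℕ → V → V → ℝ)
    (hK : ∀ t, 1 ≤ t → t ≤ T → (∀ x y, 0 ≤ K t x y) ∧ (∀ x, ∑ y, K t x y = 1))
    (β : ℝ) (hβ : 0 < β) (r : V → ℝ)
    (μ : ℕ → V → ℝ)
    (hμT_nonneg : ∀ x, 0 ≤ μ T x) (hμT_sum : ∑ x, μ T x = 1)
    (hμ_rec : ∀ t, 1 ≤ t → t ≤ T → ∀ y, μ (t - 1) y = ∑ x, μ t x * K t x y) :
    ∀ s t, s ≤ T → t ≤ T →
      (∑ x, μ s x * Real.exp (partialReward K r β s x / β)) =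
        (∑ x, μ t x * Real.exp (partialReward K r β t x / β)) ∧
      (∑ x, μ t x * Real.exp (partialReward K r β t x / β)) =
        ∑ x, μ T x * pathSum K r β T x := by
  have key : ∀ u, u ≤ T →
      (∑ x, μ u x * Real.exp (partialReward K r β u x / β)) =
        ∑ x, μ T x * pathSum K r β T x := by
    intro u hu
    have h1 : (∑ x, μ u x * Real.exp (partialReward K r β u x / β))
        = ∑ x, μ u x * pathSum K r β u x := by
      refine Finset.sum_congr rfl fun x _ => ?_
      rw [exp_partialReward T K hK β hβ r u hu x]
    rw [h1]
    exact sum_invariant T K β r μ hμ_rec u hu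
  intro s t hs ht
  exact ⟨(key s hs).trans (key t ht).symm, key t ht⟩
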